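/- arXiv:1605.00856 — 2 statements merged into one kernel-verified Lean document; each statement's English description precedes it below -/
import Mathlib

section
/- Let T ∈ (0,∞), let (Ω,F,P) be a probability space, let W : [0,T]×Ω → ℝ be a standard Brownian motion, and for N ∈ ℕ let W^N be the piecewise affine linear interpolation of W on the uniform grid {0, T/N, …, T}. Then for all p ∈ [1,∞) and N ∈ ℕ it holds that sup_{t∈[0,T]} (E[|W_t − W^N_t|^p])^{1/p} = (E[|W_T|^p])^{1/p} / (2·√N). -/
open MeasureTheory ENNReal

/-- Piecewise affine linear interpolation of `f` on the uniform grid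
`{0, T/N, 2T/N, …, T}`. -/
noncomputable def uniformInterp (T : ℝ) (N : ℕ) (f : ℝ → ℝ) : ℝ → ℝ := fun t =>
  (((⌊t * N / T⌋ : ℝ) + 1) - t * N / T) • f (⌊t * N / T⌋ * T / N)
    + (t * N / T - (⌊t * N / T⌋ : ℝ)) • f ((⌊t * N / T⌋ + 1) * T / N)

/-- `W` is a standard Brownian motion on `[0,T]`: it starts at `0`, has
continuous sample paths, independent increments, and centered Gaussian
increments with variance `t - s`. -/
structure IsStandardBM {Ω : Type} [MeasurableSpace Ω] (P : Measure Ω)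
    (T : ℝ) (W : ℝ → Ω → ℝ) : Prop where
  start : ∀ ω, W 0 ω = 0
  meas : ∀ t, Measurable (W t)
  cont : ∀ ω, ContinuousOn (fun t => W t ω) (Set.Icc (0:ℝ) T)
  indep : ∀ (n : ℕ) (t : ℕ → ℝ),
    (∀ i, i ≤ n → t i ∈ Set.Icc (0:ℝ) T) →
    (∀ i, i < n → t i ≤ t (i + 1)) →
    ProbabilityTheory.iIndepFun
      (fun (i : Fin n) (ω : Ω) => W (t (i.val + 1)) ω - W (t i.val) ω) P
  gauss : ∀ s t : ℝ, 0 ≤ s → s ≤ t → t ≤ T →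
    Measure.map (fun ω => W t ω - W s ω) P
      = ProbabilityTheory.gaussianReal 0 (Real.toNNReal (t - s))

/-!
On the grid cell `[tₙ, tₙ₊₁]` containing `t`, with `θ = (t - tₙ) / (T / N)`, the interpolation
error is `(1 - θ) (W_t - W_{tₙ}) - θ (W_{tₙ₊₁} - W_t)`, a combination of two independent centered
Gaussian increments, hence centered Gaussian with variance `θ (1 - θ) T / N`. Every `Lᵖ`-norm of
a centered Gaussian is its standard deviation times that of a standard one, and `W_T` has
variance `T`; the variance `θ (1 - θ) T / N` is largest, `T / (4N)`, at the cell midpoints.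
-/

open ProbabilityTheory

lemma eLpNorm_eq_of_map_eq_gaussianReal {Ω : Type*} [MeasurableSpace Ω] {P : Measure Ω}
    {X : Ω → ℝ} {v : ℝ} (hX : P.map X = gaussianReal 0 v.toNNReal) (p : ℝ≥0∞) :
    eLpNorm X p P = ENNReal.ofReal (√v) * eLpNorm id p (gaussianReal 0 1) := by
  have hXm : AEMeasurable X P :=
    AEMeasurable.of_map_ne_zero (by rw [hX]; exact IsProbabilityMeasure.ne_zero _)
  have hscale : gaussianReal 0 v.toNNReal = (gaussianReal 0 1).map (√v * ·) := by
    rw [gaussianReal_map_const_mul, mul_zero, mul_one]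
    congr
    ext
    simp [Real.sq_sqrt']
  calc eLpNorm X p P = eLpNorm id p (P.map X) :=
        (eLpNorm_map_measure aestronglyMeasurable_id hXm).symm
    _ = eLpNorm (√v • id) p (gaussianReal 0 1) := by
        rw [hX, hscale, eLpNorm_map_measure aestronglyMeasurable_id (by fun_prop)]
        rfl
    _ = _ := by
        rw [eLpNorm_const_smul, Real.enorm_of_nonneg (Real.sqrt_nonneg _)]

namespace IsStandardBM

variable {Ω : Type} [MeasurableSpace Ω] {P : Measure Ω} {T : ℝ} {W : ℝ → Ω → ℝ}

lemma map_const_mul_sub (hW : IsStandardBM P T W) (a : ℝ) {s t : ℝ}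
    (hs : 0 ≤ s) (hst : s ≤ t) (ht : t ≤ T) :
    P.map (fun ω => a * (W t ω - W s ω)) = gaussianReal 0 (a ^ 2 * (t - s)).toNNReal := by
  rw [← Function.comp_def (a * ·) (fun ω => W t ω - W s ω),
    ← Measure.map_map (f := fun ω => W t ω - W s ω) (by fun_prop) ((hW.meas t).sub (hW.meas s)),
    hW.gauss s t hs hst ht, gaussianReal_map_const_mul, mul_zero]
  congr 1
  ext
  simp [sub_nonneg.2 hst, mul_nonneg (sq_nonneg a)]

lemma indepFun_sub_sub (hW : IsStandardBM P T W) {t₀ t₁ t₂ : ℝ}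
    (h₀ : 0 ≤ t₀) (h₀₁ : t₀ ≤ t₁) (h₁₂ : t₁ ≤ t₂) (h₂ : t₂ ≤ T) :
    IndepFun (fun ω => W t₁ ω - W t₀ ω) (fun ω => W t₂ ω - W t₁ ω) P := by
  let t : ℕ → ℝ := fun i => if i = 0 then t₀ else if i = 1 then t₁ else t₂
  have ht : ∀ i, i ≤ 2 → t i ∈ Set.Icc 0 T := by
    intro i hi
    interval_cases i <;> refine ⟨?_, ?_⟩ <;> simp [t] <;> linarith
  have hmono : ∀ i, i < 2 → t i ≤ t (i + 1) := by
    intro i hi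
    interval_cases i <;> simpa [t]
  exact (hW.indep 2 t ht hmono).indepFun (i := 0) (j := 1) (by decide)

lemma map_add_const_mul_sub (hW : IsStandardBM P T W) (a b : ℝ) {t₀ t₁ t₂ : ℝ}
    (h₀ : 0 ≤ t₀) (h₀₁ : t₀ ≤ t₁) (h₁₂ : t₁ ≤ t₂) (h₂ : t₂ ≤ T) :
    P.map (fun ω => a * (W t₁ ω - W t₀ ω) + b * (W t₂ ω - W t₁ ω))
      = gaussianReal 0 (a ^ 2 * (t₁ - t₀) + b ^ 2 * (t₂ - t₁)).toNNReal := by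
  have hind := (hW.indepFun_sub_sub h₀ h₀₁ h₁₂ h₂).comp
    (measurable_const_mul a) (measurable_const_mul b)
  rw [Real.toNNReal_add (mul_nonneg (sq_nonneg a) (sub_nonneg.2 h₀₁))
      (mul_nonneg (sq_nonneg b) (sub_nonneg.2 h₁₂)), ← zero_add (0 : ℝ)]
  exact gaussianReal_add_gaussianReal_of_indepFun hind
    (hW.map_const_mul_sub a h₀ h₀₁ (h₁₂.trans h₂)) (hW.map_const_mul_sub b (h₀.trans h₀₁) h₁₂ h₂)

end IsStandardBM

lemma sub_uniformInterp (T : ℝ) (N : ℕ) (f : ℝ → ℝ) (t : ℝ) :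
    f t - uniformInterp T N f t
      = (1 - Int.fract (t * N / T)) * (f t - f (⌊t * N / T⌋ * T / N))
        + -Int.fract (t * N / T) * (f ((⌊t * N / T⌋ + 1) * T / N) - f t) := by
  simp only [uniformInterp, smul_eq_mul, Int.fract]
  ring

lemma floor_uniformGrid_bracket {T t : ℝ} {N : ℕ} (hT : 0 < T) (hN : 0 < N)
    (ht₀ : 0 ≤ t) (htT : t < T) :
    0 ≤ ⌊t * N / T⌋ * T / N ∧ ⌊t * N / T⌋ * T / N ≤ t ∧
      t ≤ (⌊t * N / T⌋ + 1) * T / N ∧ (⌊t * N / T⌋ + 1) * T / N ≤ T := by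
  have hN' : (0 : ℝ) < N := by exact_mod_cast hN
  set x := t * N / T with hx
  have ht : t = x * T / N := by rw [hx]; field_simp
  have hx₀ : 0 ≤ x := by positivity
  have hxN : x < N := by rw [hx, div_lt_iff₀ hT]; nlinarith
  have hfl₀ : (0 : ℝ) ≤ ⌊x⌋ := by exact_mod_cast Int.floor_nonneg.2 hx₀
  have hflN : (⌊x⌋ : ℝ) + 1 ≤ N := by
    have : ⌊x⌋ < N := Int.floor_lt.2 (by exact_mod_cast hxN)
    exact_mod_cast this
  rw [ht]
  refine ⟨by positivity, ?_, ?_, ?_⟩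
  · gcongr
    exact Int.floor_le x
  · gcongr
    exact (Int.lt_floor_add_one x).le
  · rw [div_le_iff₀ hN']
    nlinarith

/-- The variance `(t - tₙ) (tₙ₊₁ - t) / (T / N)` of the Brownian bridge between the grid points
`tₙ ≤ t ≤ tₙ₊₁`. -/
noncomputable def interpErrorVariance (T : ℝ) (N : ℕ) (t : ℝ) : ℝ :=
  Int.fract (t * N / T) * (1 - Int.fract (t * N / T)) * (T / N)

lemma IsStandardBM.map_sub_uniformInterp {Ω : Type} [MeasurableSpace Ω] {P : Measure Ω}
    [IsProbabilityMeasure P] {T : ℝ} {W : ℝ → Ω → ℝ} (hW : IsStandardBM P T W) (hT : 0 < T)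
    {N : ℕ} (hN : 0 < N) {t : ℝ} (ht : t ∈ Set.Icc 0 T) :
    P.map (fun ω => W t ω - uniformInterp T N (fun s => W s ω) t)
      = gaussianReal 0 (interpErrorVariance T N t).toNNReal := by
  rw [funext fun ω => sub_uniformInterp T N (fun s => W s ω) t]
  rcases ht.2.lt_or_eq with htT | rfl
  · obtain ⟨h₀, h₀₁, h₁₂, h₂⟩ := floor_uniformGrid_bracket hT hN ht.1 htT
    rw [hW.map_add_const_mul_sub _ _ h₀ h₀₁ h₁₂ h₂, interpErrorVariance, Int.fract]
    congr 3
    field_simp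
    ring
  · -- at `t = T` the right grid point lies beyond `T`, but `θ = 0` makes the error vanish
    have hN' : (N : ℝ) ≠ 0 := by exact_mod_cast hN.ne'
    have hgrid : t * N / t = N := by field_simp
    simp [hgrid, interpErrorVariance, hN', gaussianReal_zero_var]

lemma interpErrorVariance_le {T : ℝ} (hT : 0 ≤ T) (N : ℕ) (t : ℝ) :
    interpErrorVariance T N t ≤ T / (4 * N) := by
  have hθ : Int.fract (t * N / T) * (1 - Int.fract (t * N / T)) ≤ 1 / 4 := by
    nlinarith [sq_nonneg (Int.fract (t * N / T) - 1 / 2)]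
  calc interpErrorVariance T N t ≤ 1 / 4 * (T / N) := by
        unfold interpErrorVariance
        gcongr
    _ = T / (4 * N) := by ring

lemma interpErrorVariance_half_step {T : ℝ} (hT : T ≠ 0) {N : ℕ} (hN : N ≠ 0) :
    interpErrorVariance T N (T / (2 * N)) = T / (4 * N) := by
  have hhalf : T / (2 * N) * N / T = 2⁻¹ := by field_simp
  rw [interpErrorVariance, hhalf, Int.fract_eq_self.2 ⟨by norm_num, by norm_num⟩]
  ring

lemma iSup_sqrt_interpErrorVariance {T : ℝ} (hT : 0 < T) {N : ℕ} (hN : 1 ≤ N) :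
    ⨆ t ∈ Set.Icc 0 T, ENNReal.ofReal √(interpErrorVariance T N t)
      = ENNReal.ofReal (√T / (2 * √N)) := by
  have hN' : (1 : ℝ) ≤ N := by exact_mod_cast hN
  have hsqrt : √(T / (4 * N)) = √T / (2 * √N) := by
    rw [Real.sqrt_div' _ (by positivity), Real.sqrt_mul' _ (by positivity),
      show (4 : ℝ) = 2 ^ 2 by norm_num, Real.sqrt_sq zero_le_two]
  rw [← hsqrt]
  refine le_antisymm (iSup₂_le fun t _ => ?_) ?_
  · gcongr
    exact interpErrorVariance_le hT.le N t
  · have hmid : T / (2 * N) ∈ Set.Icc 0 T :=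
      ⟨by positivity, div_le_self hT.le (by linarith)⟩
    refine le_iSup₂_of_le (T / (2 * N)) hmid ?_
    rw [interpErrorVariance_half_step hT.ne' (by omega)]

theorem brownian_sup_Lp_error_general
    {Ω : Type} [MeasurableSpace Ω] (P : Measure Ω) [IsProbabilityMeasure P]
    (T : ℝ) (hT : 0 < T) (W : ℝ → Ω → ℝ) (hW : IsStandardBM P T W)
    (p : ℝ) (N : ℕ) (hN : 1 ≤ N) :
    (⨆ (t : ℝ) (_ : t ∈ Set.Icc (0:ℝ) T),
        eLpNorm (fun ω => W t ω - uniformInterp T N (fun s => W s ω) t)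
          (ENNReal.ofReal p) P)
      = eLpNorm (W T) (ENNReal.ofReal p) P / ENNReal.ofReal (2 * Real.sqrt N) := by
  set M := eLpNorm id (ENNReal.ofReal p) (gaussianReal 0 1)
  have hWT : P.map (W T) = gaussianReal 0 T.toNNReal := by
    simpa [hW.start] using hW.gauss 0 T le_rfl hT.le le_rfl
  calc (⨆ t ∈ Set.Icc 0 T,
        eLpNorm (fun ω => W t ω - uniformInterp T N (fun s => W s ω) t) (ENNReal.ofReal p) P)
      = ⨆ t ∈ Set.Icc 0 T, ENNReal.ofReal √(interpErrorVariance T N t) * M :=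
        iSup_congr fun t => iSup_congr fun ht =>
          eLpNorm_eq_of_map_eq_gaussianReal (hW.map_sub_uniformInterp hT hN ht) _
    _ = ENNReal.ofReal (√T / (2 * √N)) * M := by
        simp_rw [← ENNReal.iSup_mul, iSup_sqrt_interpErrorVariance hT hN]
    _ = eLpNorm (W T) (ENNReal.ofReal p) P / ENNReal.ofReal (2 * √N) := by
        rw [eLpNorm_eq_of_map_eq_gaussianReal hWT, ENNReal.ofReal_div_of_pos (by positivity),
          div_eq_mul_inv, div_eq_mul_inv, mul_right_comm]

/-- **Proposition 2.14, eq. (2.44)**: exact uniform-in-time `L^p`-error of the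
piecewise affine linear interpolation of Brownian motion on a uniform grid. -/
theorem brownian_sup_Lp_error
    {Ω : Type} [MeasurableSpace Ω] (P : Measure Ω) [IsProbabilityMeasure P]
    (T : ℝ) (hT : 0 < T) (W : ℝ → Ω → ℝ) (hW : IsStandardBM P T W)
    (p : ℝ) (hp : 1 ≤ p) (N : ℕ) (hN : 1 ≤ N) :
    (⨆ (t : ℝ) (_ : t ∈ Set.Icc (0:ℝ) T),
        eLpNorm (fun ω => W t ω - uniformInterp T N (fun s => W s ω) t)
          (ENNReal.ofReal p) P)
      = eLpNorm (W T) (ENNReal.ofReal p) P / ENNReal.ofReal (2 * Real.sqrt N) :=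
  brownian_sup_Lp_error_general P T hT W hW p N hN
end

section
/- Let (E,‖·‖_E) be a real Banach space, let (Ω,F,P) be a probability space, let k ∈ ℕ, let ξ_1, …, ξ_k : Ω → E be Bochner integrable strongly measurable random variables with E[ξ_j] = 0 for every j ∈ {1,…,k}, and let r_1, …, r_k : Ω → {−1,1} be a P-Rademacher family such that the 2k random variables ξ_1, …, ξ_k, r_1, …, r_k are mutually independent. Then for all p ∈ [1,∞) it holds that (E[‖Σ_{j=1}^k ξ_j‖_E^p])^{1/p} ≤ 2 · (E[‖Σ_{j=1}^k r_j·ξ_j‖_E^p])^{1/p} (both sides taking values in [0,∞]). -/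
/-! Fix a sign pattern `s` and split `∑ ξ_j = X + Y` with `X = ∑_{j ∈ s} ξ_j` and
`Y = ∑_{j ∉ s} ξ_j`. These are independent and centred, so `X = 𝔼[X - Y | X]` and, conditional
expectation being an `L^p` contraction, `‖X‖_p ≤ ‖X - Y‖_p`; likewise `‖Y‖_p ≤ ‖X - Y‖_p`, whence
`‖∑ ξ_j‖_p ≤ 2 ‖X - Y‖_p`. On the event that `(r_j)` realises the pattern `s`,
`∑ r_j ξ_j = X - Y`, and that event is independent of the `ξ_j`; so `𝔼 ‖∑ r_j ξ_j‖^p` is an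
average of the `𝔼 ‖X - Y‖^p` over the patterns, hence at least the smallest of them. -/

open MeasureTheory ENNReal

/-- Index type for the joint family `ξ_1, …, ξ_k, r_1, …, r_k`: the left
summand indexes the `E`-valued variables `ξ_j` and the right summand the
real-valued Rademacher variables `r_j`. -/
def mixedType (E : Type) (k : ℕ) : Fin k ⊕ Fin k → Type := fun i =>
  match i with
  | Sum.inl _ => E
  | Sum.inr _ => ℝ

/-- The canonical measurable-space structure on `mixedType E k i`. -/
def mixedMeasurableSpace (E : Type) [MeasurableSpace E] (k : ℕ) :
    ∀ i : Fin k ⊕ Fin k, MeasurableSpace (mixedType E k i) := fun i =>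
  match i with
  | Sum.inl _ => (inferInstance : MeasurableSpace E)
  | Sum.inr _ => (inferInstance : MeasurableSpace ℝ)

/-- The joint family `ξ_1, …, ξ_k, r_1, …, r_k` as a single dependent family. -/
def mixedFamily {Ω E : Type} (k : ℕ) (ξ : Fin k → Ω → E) (r : Fin k → Ω → ℝ) :
    ∀ i : Fin k ⊕ Fin k, Ω → mixedType E k i := fun i =>
  match i with
  | Sum.inl j => ξ j
  | Sum.inr j => r j

open ProbabilityTheory Finset

theorem sum_ite_smul_eq_sum_sub_sum_compl {ι R M : Type*} [Fintype ι] [DecidableEq ι] [Ring R]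
    [AddCommGroup M] [Module R M] (s : Finset ι) (x : ι → M) :
    ∑ j, (if j ∈ s then (1 : R) else -1) • x j = ∑ j ∈ s, x j - ∑ j ∈ sᶜ, x j := by
  rw [← sum_add_sum_compl s, sub_eq_add_neg, ← sum_neg_distrib]
  congr 1 <;> refine sum_congr rfl fun j hj => ?_
  · rw [if_pos hj, one_smul]
  · rw [if_neg (mem_compl.1 hj), neg_one_smul]

section Randomisation

variable {Ω : Type*} {m₁ m₂ m : MeasurableSpace Ω} {μ : Measure Ω} [IsProbabilityMeasure μ]

theorem le_lintegral_of_indep_selector {ι : Type*} [Countable ι] (hle₁ : m₁ ≤ m)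
    (hle₂ : m₂ ≤ m) {σ : Ω → ι} (hσ : ∀ i, MeasurableSet[m₁] (σ ⁻¹' {i}))
    {g : ι → Ω → ℝ≥0∞} (hg : ∀ i, Measurable[m₂] (g i)) (hind : Indep m₁ m₂ μ) {c : ℝ≥0∞}
    (hc : ∀ i, c ≤ ∫⁻ ω, g i ω ∂μ) :
    c ≤ ∫⁻ ω, g (σ ω) ω ∂μ := by
  have hfiber : ∀ i, MeasurableSet (σ ⁻¹' {i}) := fun i => hle₁ _ (hσ i)
  have hdisj : Pairwise (Function.onFun Disjoint fun i => σ ⁻¹' {i}) :=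
    fun i j hij => (Set.disjoint_singleton.2 hij).preimage σ
  have hpiece : ∀ i, ∫⁻ ω in σ ⁻¹' {i}, g (σ ω) ω ∂μ = μ (σ ⁻¹' {i}) * ∫⁻ ω, g i ω ∂μ := by
    intro i
    have hindicator : Measurable[m₁] ((σ ⁻¹' {i}).indicator (1 : Ω → ℝ≥0∞)) :=
      letI := m₁; measurable_one.indicator (hσ i)
    rw [setLIntegral_congr_fun (hfiber i) fun ω (hω : σ ω = i) => by rw [hω],
      ← lintegral_indicator_one (hfiber i), ← lintegral_indicator (hfiber i),
      ← lintegral_mul_eq_lintegral_mul_lintegral_of_independent_measurableSpace hle₁ hle₂ hind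
        hindicator (hg i)]
    congr 1 with ω
    by_cases hω : ω ∈ σ ⁻¹' {i} <;> simp [hω]
  calc c = ∑' i, μ (σ ⁻¹' {i}) * c := by
        rw [ENNReal.tsum_mul_right, ← measure_iUnion hdisj hfiber, ← Set.preimage_iUnion,
          Set.iUnion_of_singleton, Set.preimage_univ, measure_univ, one_mul]
    _ ≤ ∑' i, μ (σ ⁻¹' {i}) * ∫⁻ ω, g i ω ∂μ := ENNReal.tsum_le_tsum fun i => by gcongr; exact hc i
    _ = ∫⁻ ω, g (σ ω) ω ∂μ := by
        simp_rw [← hpiece]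
        rw [← lintegral_iUnion hfiber hdisj, ← Set.preimage_iUnion, Set.iUnion_of_singleton,
          Set.preimage_univ, Measure.restrict_univ]

variable {E : Type*} [NormedAddCommGroup E]

theorem le_eLpNorm_of_indep_selector {ι : Type*} [Countable ι] (hle₁ : m₁ ≤ m)
    (hle₂ : m₂ ≤ m) {σ : Ω → ι} (hσ : ∀ i, MeasurableSet[m₁] (σ ⁻¹' {i}))
    {g : ι → Ω → E} (hg : ∀ i, StronglyMeasurable[m₂] (g i)) (hind : Indep m₁ m₂ μ)
    {p : ℝ≥0∞} (hp0 : p ≠ 0) (hptop : p ≠ ∞) {c : ℝ≥0∞} (hc : ∀ i, c ≤ eLpNorm (g i) p μ) :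
    c ≤ eLpNorm (fun ω => g (σ ω) ω) p μ := by
  have hp : 0 < p.toReal := ENNReal.toReal_pos hp0 hptop
  simp only [eLpNorm_eq_lintegral_rpow_enorm_toReal hp0 hptop, one_div,
    ENNReal.le_rpow_inv_iff hp] at hc ⊢
  exact le_lintegral_of_indep_selector hle₁ hle₂ hσ (fun i => (hg i).enorm.pow_const _) hind hc

theorem exists_eLpNorm_le_eLpNorm_of_indep_selector {ι : Type*} [Finite ι] [Nonempty ι]
    (hle₁ : m₁ ≤ m) (hle₂ : m₂ ≤ m) {σ : Ω → ι} (hσ : ∀ i, MeasurableSet[m₁] (σ ⁻¹' {i}))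
    {g : ι → Ω → E} (hg : ∀ i, StronglyMeasurable[m₂] (g i)) (hind : Indep m₁ m₂ μ)
    {p : ℝ≥0∞} (hp0 : p ≠ 0) (hptop : p ≠ ∞) :
    ∃ i, eLpNorm (g i) p μ ≤ eLpNorm (fun ω => g (σ ω) ω) p μ := by
  obtain ⟨i, hi⟩ := Finite.exists_min fun i => eLpNorm (g i) p μ
  exact ⟨i, le_eLpNorm_of_indep_selector hle₁ hle₂ hσ hg hind hp0 hptop hi⟩

variable [NormedSpace ℝ E]

theorem exists_eLpNorm_sum_sub_sum_compl_le_eLpNorm_sum_smul {ι : Type*} [Fintype ι]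
    [DecidableEq ι] (hle₁ : m₁ ≤ m) (hle₂ : m₂ ≤ m) (hind : Indep m₁ m₂ μ)
    {ξ : ι → Ω → E} (hξ : ∀ j, StronglyMeasurable[m₂] (ξ j)) {r : ι → Ω → ℝ}
    (hr : ∀ j, Measurable[m₁] (r j)) (hrval : ∀ j ω, r j ω = 1 ∨ r j ω = -1)
    {p : ℝ≥0∞} (hp0 : p ≠ 0) (hptop : p ≠ ∞) :
    ∃ s : Finset ι, eLpNorm (fun ω => ∑ j ∈ s, ξ j ω - ∑ j ∈ sᶜ, ξ j ω) p μ
      ≤ eLpNorm (fun ω => ∑ j, r j ω • ξ j ω) p μ := by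
  classical
  let σ ω : Finset ι := {j | r j ω = 1}
  have hσ s : MeasurableSet[m₁] (σ ⁻¹' {s}) := by
    have hfiber : σ ⁻¹' {s} = ⋂ j, {ω | r j ω = 1 ↔ j ∈ s} := by
      ext ω
      simp [σ, Finset.ext_iff]
    rw [hfiber]
    refine MeasurableSet.iInter fun j => ?_
    by_cases hj : j ∈ s
    · simp only [hj, iff_true]
      exact (hr j) (measurableSet_singleton 1)
    · simp only [hj, iff_false]
      exact ((hr j) (measurableSet_singleton 1)).compl
  have hrσ ω j : r j ω = if j ∈ σ ω then 1 else -1 := by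
    rcases hrval j ω with h | h <;> simp [σ, h]
  have hrξ : (fun ω => ∑ j, r j ω • ξ j ω)
      = fun ω => ∑ j ∈ σ ω, ξ j ω - ∑ j ∈ (σ ω)ᶜ, ξ j ω := by
    funext ω
    simp only [← sum_ite_smul_eq_sum_sub_sum_compl (R := ℝ), ← hrσ ω]
  have hsum (t : Finset ι) : StronglyMeasurable[m₂] (fun ω => ∑ j ∈ t, ξ j ω) :=
    Finset.stronglyMeasurable_fun_sum _ fun j _ => hξ j
  rw [hrξ]
  exact exists_eLpNorm_le_eLpNorm_of_indep_selector hle₁ hle₂ hσ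
    (fun s => (hsum s).sub (hsum sᶜ)) hind hp0 hptop

variable [CompleteSpace E]

theorem eLpNorm_le_eLpNorm_sub_of_indep (hle₁ : m₁ ≤ m) (hle₂ : m₂ ≤ m)
    {X Y : Ω → E} (hX : StronglyMeasurable[m₁] X) (hY : StronglyMeasurable[m₂] Y)
    (hXint : Integrable X μ) (hYint : Integrable Y μ) (hY0 : ∫ ω, Y ω ∂μ = 0)
    (hind : Indep m₁ m₂ μ) {p : ℝ≥0∞} (hp : 1 ≤ p) :
    eLpNorm X p μ ≤ eLpNorm (X - Y) p μ := by
  have hcond : μ[X - Y | m₁] =ᵐ[μ] X := by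
    filter_upwards [condExp_sub hXint hYint m₁, condExp_indep_eq hle₂ hle₁ hY hind.symm]
      with ω hsub hYω
    rw [hsub, Pi.sub_apply, condExp_of_stronglyMeasurable hle₁ hX hXint, hYω, hY0, sub_zero]
  calc eLpNorm X p μ = eLpNorm (μ[X - Y | m₁]) p μ := (eLpNorm_congr_ae hcond).symm
    _ ≤ eLpNorm (X - Y) p μ := eLpNorm_condExp_le_eLpNorm _ hp

theorem eLpNorm_add_le_two_mul_eLpNorm_sub_of_indep (hle₁ : m₁ ≤ m) (hle₂ : m₂ ≤ m)
    {X Y : Ω → E} (hX : StronglyMeasurable[m₁] X) (hY : StronglyMeasurable[m₂] Y)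
    (hXint : Integrable X μ) (hYint : Integrable Y μ)
    (hX0 : ∫ ω, X ω ∂μ = 0) (hY0 : ∫ ω, Y ω ∂μ = 0)
    (hind : Indep m₁ m₂ μ) {p : ℝ≥0∞} (hp : 1 ≤ p) :
    eLpNorm (X + Y) p μ ≤ 2 * eLpNorm (X - Y) p μ :=
  calc eLpNorm (X + Y) p μ ≤ eLpNorm X p μ + eLpNorm Y p μ :=
        eLpNorm_add_le (hX.mono hle₁).aestronglyMeasurable (hY.mono hle₂).aestronglyMeasurable hp
    _ ≤ eLpNorm (X - Y) p μ + eLpNorm (X - Y) p μ := by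
        gcongr
        · exact eLpNorm_le_eLpNorm_sub_of_indep hle₁ hle₂ hX hY hXint hYint hY0 hind hp
        · rw [eLpNorm_sub_comm]
          exact eLpNorm_le_eLpNorm_sub_of_indep hle₂ hle₁ hY hX hYint hXint hX0 hind.symm hp
    _ = 2 * eLpNorm (X - Y) p μ := (two_mul _).symm

theorem eLpNorm_sum_le_two_mul_eLpNorm_sum_sub_sum_compl {ι : Type*} [Fintype ι]
    [DecidableEq ι] {𝓕 : ι → MeasurableSpace Ω} (h𝓕 : ∀ j, 𝓕 j ≤ m) (hind : iIndep 𝓕 μ)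
    {ξ : ι → Ω → E} (hξ : ∀ j, StronglyMeasurable[𝓕 j] (ξ j)) (hξint : ∀ j, Integrable (ξ j) μ)
    (hξmean : ∀ j, ∫ ω, ξ j ω ∂μ = 0) (s : Finset ι) {p : ℝ≥0∞} (hp : 1 ≤ p) :
    eLpNorm (fun ω => ∑ j, ξ j ω) p μ
      ≤ 2 * eLpNorm (fun ω => ∑ j ∈ s, ξ j ω - ∑ j ∈ sᶜ, ξ j ω) p μ := by
  have hsum (t : Finset ι) :
      StronglyMeasurable[⨆ j ∈ (t : Set ι), 𝓕 j] (fun ω => ∑ j ∈ t, ξ j ω) :=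
    Finset.stronglyMeasurable_fun_sum _ fun j hj =>
      (hξ j).mono (le_iSup₂ (f := fun j (_ : j ∈ (t : Set ι)) => 𝓕 j) j hj)
  have hint (t : Finset ι) : Integrable (fun ω => ∑ j ∈ t, ξ j ω) μ :=
    integrable_finsetSum _ fun j _ => hξint j
  have hmean (t : Finset ι) : ∫ ω, ∑ j ∈ t, ξ j ω ∂μ = 0 := by
    rw [integral_finsetSum _ fun j _ => hξint j]
    simp [hξmean]
  have hsplit : (fun ω => ∑ j, ξ j ω)
      = (fun ω => ∑ j ∈ s, ξ j ω) + fun ω => ∑ j ∈ sᶜ, ξ j ω := by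
    simp only [Pi.add_def, sum_add_sum_compl]
  have hdisj : Disjoint (s : Set ι) ↑sᶜ := by
    rw [coe_compl]
    exact disjoint_compl_right
  rw [hsplit]
  exact eLpNorm_add_le_two_mul_eLpNorm_sub_of_indep (iSup₂_le fun j _ => h𝓕 j)
    (iSup₂_le fun j _ => h𝓕 j) (hsum s) (hsum sᶜ) (hint s) (hint sᶜ) (hmean s) (hmean sᶜ)
    (indep_iSup_of_disjoint h𝓕 hind hdisj) hp

end Randomisation

theorem randomisation_lemma_general
    {Ω E : Type} [MeasurableSpace Ω]
    [NormedAddCommGroup E] [NormedSpace ℝ E] [CompleteSpace E]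
    [MeasurableSpace E] [BorelSpace E]
    (P : Measure Ω) [IsProbabilityMeasure P]
    (k : ℕ)
    (ξ : Fin k → Ω → E) (r : Fin k → Ω → ℝ)
    (hξm : ∀ j, StronglyMeasurable (ξ j))
    (hξint : ∀ j, Integrable (ξ j) P)
    (hξmean : ∀ j, ∫ ω, ξ j ω ∂P = 0)
    (hrm : ∀ j, Measurable (r j))
    (hrval : ∀ j ω, r j ω = 1 ∨ r j ω = -1)
    (hindep : @ProbabilityTheory.iIndepFun _ _ _ _
      (mixedMeasurableSpace E k) (mixedFamily k ξ r) P)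
    (p : ℝ) (hp : 1 ≤ p) :
    eLpNorm (fun ω => ∑ j, ξ j ω) (ENNReal.ofReal p) P
      ≤ 2 * eLpNorm (fun ω => ∑ j, r j ω • ξ j ω) (ENNReal.ofReal p) P := by
  have hq : 1 ≤ ENNReal.ofReal p := ENNReal.one_le_ofReal.2 hp
  let 𝓕 i := (mixedMeasurableSpace E k i).comap (mixedFamily k ξ r i)
  have h𝓕 : ∀ i, 𝓕 i ≤ ‹_› := by
    rintro (j | j)
    exacts [(hξm j).measurable.comap_le, (hrm j).comap_le]
  have hiIndep : iIndep 𝓕 P := (iIndepFun_iff_iIndep _ _ _).1 hindep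
  have hξ j : StronglyMeasurable[𝓕 (Sum.inl j)] (ξ j) := by
    refine stronglyMeasurable_iff_measurable_separable.2 ⟨?_, (hξm j).isSeparable_range⟩
    exact Measurable.of_comap_le le_rfl
  have hr j : Measurable[𝓕 (Sum.inr j)] (r j) := Measurable.of_comap_le le_rfl
  have hle_iSup {S : Set (Fin k ⊕ Fin k)} {i} (hi : i ∈ S) : 𝓕 i ≤ ⨆ i ∈ S, 𝓕 i :=
    le_iSup₂ (f := fun i (_ : i ∈ S) => 𝓕 i) i hi
  obtain ⟨s, hs⟩ := exists_eLpNorm_sum_sub_sum_compl_le_eLpNorm_sum_smul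
    (iSup₂_le fun i _ => h𝓕 i) (iSup₂_le fun i _ => h𝓕 i)
    (indep_iSup_of_disjoint h𝓕 hiIndep Set.isCompl_range_inl_range_inr.disjoint.symm)
    (fun j => (hξ j).mono (hle_iSup ⟨j, rfl⟩)) (fun j => (hr j).mono (hle_iSup ⟨j, rfl⟩) le_rfl)
    hrval (zero_lt_one.trans_le hq).ne' ENNReal.ofReal_ne_top
  calc eLpNorm (fun ω => ∑ j, ξ j ω) (ENNReal.ofReal p) P
      ≤ 2 * eLpNorm (fun ω => ∑ j ∈ s, ξ j ω - ∑ j ∈ sᶜ, ξ j ω) (ENNReal.ofReal p) P :=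
        eLpNorm_sum_le_two_mul_eLpNorm_sum_sub_sum_compl (fun j => h𝓕 _)
          (hiIndep.precomp Sum.inl_injective) hξ hξint hξmean s hq
    _ ≤ 2 * eLpNorm (fun ω => ∑ j, r j ω • ξ j ω) (ENNReal.ofReal p) P := by gcongr

/-- **Lemma 4.12** (randomisation): if `ξ_1, …, ξ_k` are centered integrable
random variables and `r_1, …, r_k` is a Rademacher family such that the `2k`
random variables `ξ_1, …, ξ_k, r_1, …, r_k` are mutually independent, then the
`L^p`-norm of `∑ ξ_j` is at most twice the `L^p`-norm of `∑ r_j • ξ_j`. -/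
theorem randomisation_lemma
    {Ω E : Type} [MeasurableSpace Ω]
    [NormedAddCommGroup E] [NormedSpace ℝ E] [CompleteSpace E]
    [MeasurableSpace E] [BorelSpace E]
    (P : Measure Ω) [IsProbabilityMeasure P]
    (k : ℕ) (hk : 1 ≤ k)
    (ξ : Fin k → Ω → E) (r : Fin k → Ω → ℝ)
    (hξm : ∀ j, StronglyMeasurable (ξ j))
    (hξint : ∀ j, Integrable (ξ j) P)
    (hξmean : ∀ j, ∫ ω, ξ j ω ∂P = 0)
    (hrm : ∀ j, Measurable (r j))
    (hrval : ∀ j ω, r j ω = 1 ∨ r j ω = -1)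
    (hrsym : ∀ j, P {ω | r j ω = 1} = P {ω | r j ω = -1})
    (hindep : @ProbabilityTheory.iIndepFun _ _ _ _
      (mixedMeasurableSpace E k) (mixedFamily k ξ r) P)
    (p : ℝ) (hp : 1 ≤ p) :
    eLpNorm (fun ω => ∑ j, ξ j ω) (ENNReal.ofReal p) P
      ≤ 2 * eLpNorm (fun ω => ∑ j, r j ω • ξ j ω) (ENNReal.ofReal p) P :=
  randomisation_lemma_general P k ξ r hξm hξint hξmean hrm hrval hindep p hp
end
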